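/- arXiv:1601.05576 — 3 statements merged into one kernel-verified Lean document; each statement's English description precedes it below -/
import Mathlib

section
/- Let φ : ℕ → ℝ be a sequence with φ_n > 0 for all n satisfying the recurrence (n+1)(φ_{n+1}² − φ_n²)/φ_{n+1} + n(φ_{n-1}² − φ_n²)/φ_{n-1} = R/φ_n for n ≥ 1 (with R > 0), together with φ_1² − φ_0² = R φ_1/φ_0. Then the sequence (φ_n) is strictly increasing. -/
/-!
By induction, `φ n < φ (n + 1)`. The initial condition gives `φ 1 ^ 2 - φ 0 ^ 2 > 0`. If
`φ (n - 1) < φ n`, the second term of the recurrence at `n` is negative, so the first one exceeds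
`R / φ n > 0`, which forces `φ (n + 1) ^ 2 > φ n ^ 2`.
-/

theorem lt_of_sq_sub_sq_eq_div {R a b : ℝ} (hR : 0 < R) (ha : 0 < a) (hb : 0 < b)
    (h : b ^ 2 - a ^ 2 = R * b / a) : a < b := by
  have hsq : 0 < b ^ 2 - a ^ 2 := h ▸ by positivity
  exact lt_of_pow_lt_pow_left₀ 2 hb.le (sub_pos.1 hsq)

theorem lt_of_recurrence_step {R m a b c : ℝ} (hR : 0 < R) (hm : 0 ≤ m)
    (ha : 0 ≤ a) (hb : 0 < b) (hc : 0 < c) (hab : a < b)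
    (h : (m + 1) * (c ^ 2 - b ^ 2) / c + m * (a ^ 2 - b ^ 2) / a = R / b) : b < c := by
  have hback : m * (a ^ 2 - b ^ 2) / a ≤ 0 :=
    div_nonpos_of_nonpos_of_nonneg
      (mul_nonpos_of_nonneg_of_nonpos hm (sub_nonpos.2 (pow_le_pow_left₀ ha hab.le 2))) ha
  have hforward : 0 < (m + 1) * (c ^ 2 - b ^ 2) / c := by
    have := div_pos hR hb
    linarith
  have hsq : 0 < c ^ 2 - b ^ 2 :=
    pos_of_mul_pos_right ((div_pos_iff_of_pos_right hc).1 hforward) (by linarith)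
  exact lt_of_pow_lt_pow_left₀ 2 hc.le (sub_pos.1 hsq)

/-- A positive solution of the constant-curvature recurrence on the Moyal plane
is strictly increasing. -/
theorem moyal_sphere_stmt5 (R : ℝ) (hR : 0 < R) (φ : ℕ → ℝ)
    (hpos : ∀ n, 0 < φ n)
    (hrec : ∀ n : ℕ, 1 ≤ n →
      ((n : ℝ) + 1) * (φ (n + 1) ^ 2 - φ n ^ 2) / φ (n + 1)
        + (n : ℝ) * (φ (n - 1) ^ 2 - φ n ^ 2) / φ (n - 1) = R / φ n)
    (h0 : φ 1 ^ 2 - φ 0 ^ 2 = R * φ 1 / φ 0) :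
    StrictMono φ := by
  refine strictMono_nat_of_lt_succ fun n => ?_
  induction n with
  | zero => exact lt_of_sq_sub_sq_eq_div hR (hpos 0) (hpos 1) h0
  | succ n ih =>
    have h := hrec (n + 1) n.succ_pos
    rw [Nat.add_sub_cancel] at h
    exact lt_of_recurrence_step hR (Nat.cast_nonneg _) (hpos n).le (hpos _) (hpos _) ih h
end

section
/- The general solution of the linear ODE ε''(r) + (1/r − 4r/(1+r²)) ε'(r) + 4/(1+r²) ε(r) + 8η(1−r²)/(1+r²)³ = 0 on (0,∞) is ε(r) = C₁(r²−1) + C₂((r²−1)log r − 2) − (η/3)(1+r²)^{-1}[(1−r⁴)log(1+r²) + 2(r⁴−1)log r + r² − 2]; in particular this ε is a solution for any constants C₁, C₂. -/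
/-!
The operator `L ε = ε'' + (1/r - 4r/(1+r²)) ε' + 4/(1+r²) ε` is linear, and both `r² - 1` and
`(r² - 1) log r - 2` lie in its kernel on `(0, ∞)`. Since `(1 - r⁴)/(1 + r²) = 1 - r²`, the
`η`-term is `-(η/3) p` with `p = (1 - r²) log (1 + r²) + 2 (r² - 1) log r + 1 - 3/(1 + r²)`,
and a direct computation gives `L p = 24 (1 - r²)/(1 + r²)³`, hence
`L ε = -8η (1 - r²)/(1 + r²)³`.
-/

open Real

noncomputable def fubiniStudyOp (r y y' y'' : ℝ) : ℝ :=
  y'' + (1 / r - 4 * r / (1 + r ^ 2)) * y' + 4 / (1 + r ^ 2) * y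

/-- The derivatives `y'`, `y''` are carried as data, so `deriv` is only ever evaluated where it
is known to exist. -/
def SolvesFubiniStudyEq (y y' y'' g : ℝ → ℝ) : Prop :=
  ∀ r > 0, HasDerivAt y (y' r) r ∧ HasDerivAt y' (y'' r) r ∧
    fubiniStudyOp r (y r) (y' r) (y'' r) = g r

namespace SolvesFubiniStudyEq

variable {y y' y'' g z z' z'' h : ℝ → ℝ}

theorem add (hy : SolvesFubiniStudyEq y y' y'' g) (hz : SolvesFubiniStudyEq z z' z'' h) :
    SolvesFubiniStudyEq (fun r => y r + z r) (fun r => y' r + z' r) (fun r => y'' r + z'' r)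
      (fun r => g r + h r) := by
  intro r hr
  obtain ⟨hy₁, hy₂, hyL⟩ := hy r hr
  obtain ⟨hz₁, hz₂, hzL⟩ := hz r hr
  refine ⟨hy₁.add hz₁, hy₂.add hz₂, ?_⟩
  simp only [← hyL, ← hzL, fubiniStudyOp]
  ring

theorem sub (hy : SolvesFubiniStudyEq y y' y'' g) (hz : SolvesFubiniStudyEq z z' z'' h) :
    SolvesFubiniStudyEq (fun r => y r - z r) (fun r => y' r - z' r) (fun r => y'' r - z'' r)
      (fun r => g r - h r) := by
  intro r hr
  obtain ⟨hy₁, hy₂, hyL⟩ := hy r hr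
  obtain ⟨hz₁, hz₂, hzL⟩ := hz r hr
  refine ⟨hy₁.sub hz₁, hy₂.sub hz₂, ?_⟩
  simp only [← hyL, ← hzL, fubiniStudyOp]
  ring

theorem const_mul (c : ℝ) (hy : SolvesFubiniStudyEq y y' y'' g) :
    SolvesFubiniStudyEq (fun r => c * y r) (fun r => c * y' r) (fun r => c * y'' r)
      (fun r => c * g r) := by
  intro r hr
  obtain ⟨hy₁, hy₂, hyL⟩ := hy r hr
  refine ⟨hy₁.const_mul c, hy₂.const_mul c, ?_⟩
  simp only [← hyL, fubiniStudyOp]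
  ring

theorem deriv_eq (hy : SolvesFubiniStudyEq y y' y'' g) {r : ℝ} (hr : 0 < r) :
    deriv y r = y' r :=
  (hy r hr).1.deriv

theorem deriv_deriv_eq (hy : SolvesFubiniStudyEq y y' y'' g) {r : ℝ} (hr : 0 < r) :
    deriv (deriv y) r = y'' r := by
  have h : deriv y =ᶠ[nhds r] y' :=
    Filter.eventuallyEq_of_mem (isOpen_Ioi.mem_nhds hr) fun x hx => hy.deriv_eq hx
  rw [h.deriv_eq, (hy r hr).2.1.deriv]

theorem fubiniStudyOp_eq (hy : SolvesFubiniStudyEq y y' y'' g) {r : ℝ} (hr : 0 < r) :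
    fubiniStudyOp r (y r) (deriv y r) (deriv (deriv y) r) = g r := by
  rw [hy.deriv_eq hr, hy.deriv_deriv_eq hr]
  exact (hy r hr).2.2

end SolvesFubiniStudyEq

theorem solvesFubiniStudyEq_sq_sub_one :
    SolvesFubiniStudyEq (fun r => r ^ 2 - 1) (fun r => 2 * r) (fun _ => 2) (fun _ => 0) := by
  intro r hr
  refine ⟨?_, ?_, ?_⟩
  · simpa using (hasDerivAt_pow 2 r).sub_const 1
  · simpa using (hasDerivAt_id' r).const_mul 2
  · simp only [fubiniStudyOp]
    field_simp
    ring

theorem solvesFubiniStudyEq_log :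
    SolvesFubiniStudyEq (fun r => (r ^ 2 - 1) * log r - 2) (fun r => 2 * r * log r + r - r⁻¹)
      (fun r => 2 * log r + 3 + r⁻¹ ^ 2) (fun _ => 0) := by
  intro r hr
  have hlog := hasDerivAt_log hr.ne'
  refine ⟨?_, ?_, ?_⟩
  · refine ((((hasDerivAt_pow 2 r).sub_const 1).mul hlog).sub_const 2).congr_deriv ?_
    field_simp
    ring
  · refine (((((hasDerivAt_id' r).const_mul 2).mul hlog).add (hasDerivAt_id' r)).sub
      (hasDerivAt_inv hr.ne')).congr_deriv ?_
    field_simp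
    ring
  · simp only [fubiniStudyOp]
    field_simp
    ring

noncomputable def fsParticular (r : ℝ) : ℝ :=
  (1 - r ^ 2) * log (1 + r ^ 2) + 2 * (r ^ 2 - 1) * log r + 1 - 3 / (1 + r ^ 2)

theorem fsParticular_eq (r : ℝ) :
    fsParticular r = (1 + r ^ 2)⁻¹ *
      ((1 - r ^ 4) * log (1 + r ^ 2) + 2 * (r ^ 4 - 1) * log r + r ^ 2 - 2) := by
  unfold fsParticular
  field_simp
  ring

theorem solvesFubiniStudyEq_fsParticular :
    SolvesFubiniStudyEq fsParticular
      (fun r => 4 * r * log r - 2 * r * log (1 + r ^ 2) - 2 / r + 4 * r / (1 + r ^ 2)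
        + 6 * r / (1 + r ^ 2) ^ 2)
      (fun r => 4 * log r - 2 * log (1 + r ^ 2) + 4 + 2 / r ^ 2 + 4 * (1 - r ^ 2) / (1 + r ^ 2)
        + (6 - 8 * r ^ 2) / (1 + r ^ 2) ^ 2 - 24 * r ^ 2 / (1 + r ^ 2) ^ 3)
      (fun r => 24 * (1 - r ^ 2) / (1 + r ^ 2) ^ 3) := by
  intro r hr
  have hpos : (0 : ℝ) < 1 + r ^ 2 := by positivity
  have hsq : HasDerivAt (fun r : ℝ => r ^ 2) (2 * r) r := by simpa using hasDerivAt_pow 2 r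
  have hden : HasDerivAt (fun r : ℝ => 1 + r ^ 2) (2 * r) r := hsq.const_add 1
  have hlog := hasDerivAt_log hr.ne'
  have hlog1 := hden.log hpos.ne'
  have hid := hasDerivAt_id' r
  refine ⟨?_, ?_, ?_⟩
  · have hA := (hsq.const_sub 1).mul hlog1
    have hB := ((hsq.sub_const 1).const_mul 2).mul hlog
    have hC := (hasDerivAt_const r (3 : ℝ)).div hden hpos.ne'
    refine (((hA.add hB).add_const 1).sub hC).congr_deriv ?_
    field_simp
    ring
  · have hA := (hid.const_mul 4).mul hlog
    have hB := (hid.const_mul 2).mul hlog1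
    have hC := (hasDerivAt_inv hr.ne').const_mul 2
    have hD := (hid.const_mul 4).div hden hpos.ne'
    have hE := (hid.const_mul 6).div (hden.fun_pow 2) (by positivity)
    refine ((((hA.sub hB).sub hC).add hD).add hE).congr_deriv ?_
    field_simp
    ring
  · simp only [fubiniStudyOp, fsParticular]
    field_simp
    ring

/-- For any constants `C₁, C₂`, the function
`ε(r) = C₁(r²−1) + C₂((r²−1)log r − 2) − (η/3)(1+r²)⁻¹[(1−r⁴)log(1+r²) + 2(r⁴−1)log r + r² − 2]`
solves the order-θ² ODE
`ε'' + (1/r − 4r/(1+r²)) ε' + 4/(1+r²) ε + 8η(1−r²)/(1+r²)³ = 0` on `(0,∞)`. -/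
theorem moyal_sphere_stmt14 (η C₁ C₂ : ℝ) (ε : ℝ → ℝ)
    (hε : ∀ r, ε r = C₁ * (r ^ 2 - 1) + C₂ * ((r ^ 2 - 1) * Real.log r - 2)
      - (η / 3) * (1 + r ^ 2)⁻¹ *
        ((1 - r ^ 4) * Real.log (1 + r ^ 2) + 2 * (r ^ 4 - 1) * Real.log r + r ^ 2 - 2)) :
    ∀ r > 0,
      deriv (deriv ε) r + (1 / r - 4 * r / (1 + r ^ 2)) * deriv ε r
        + 4 / (1 + r ^ 2) * ε r + 8 * η * (1 - r ^ 2) / (1 + r ^ 2) ^ 3 = 0 := by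
  intro r hr
  obtain rfl : ε = fun r => C₁ * (r ^ 2 - 1) + C₂ * ((r ^ 2 - 1) * log r - 2)
      - η / 3 * fsParticular r := by
    funext r
    rw [hε, fsParticular_eq]
    ring
  have hsol := ((solvesFubiniStudyEq_sq_sub_one.const_mul C₁).add
    (solvesFubiniStudyEq_log.const_mul C₂)).sub
    (solvesFubiniStudyEq_fsParticular.const_mul (η / 3))
  have hop := hsol.fubiniStudyOp_eq hr
  simp only [fubiniStudyOp] at hop
  linear_combination hop
end

section
/- Let φ_n be a solution of the constant-curvature recurrence (n+1)(φ_{n+1}² − φ_n²)/φ_{n+1} + n(φ_{n-1}² − φ_n²)/φ_{n-1} = R/φ_n. Then the formal asymptotic expansion φ_n = n + (R+1)/2 + (1/8)n^{-1} − ((13R+9)/144)n^{-2} + O(n^{-3}) satisfies the recurrence up to errors of order n^{-3}: substituting ψ_n = n + (R+1)/2 + (1/8)n^{-1} − ((13R+9)/144)n^{-2} into the left-hand side minus right-hand side yields O(n^{-3}) as n → ∞. -/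
/-!
Put `u = 1/x`. For the homogeneous cubic `H(a, u) = 144a³ + 72(R+1)a²u + 18au² − (13R+9)u³`
one has `ψ(a/u) = H(a, u) / (144a²u)`, and `x ± 1 = (1 ± u)/u`, so the defect at `x` is a
rational function of `u`. Clearing denominators, the terms of order `u⁻³, …, u⁰` cancel and
`x³ · defect(x) = N(u) / D(u)` with polynomials `N`, `D` and `D(0) = 144³ ≠ 0`. Hence
`x³ · defect(x)` tends to `N(0)/D(0)` as `x → ∞`, and in particular stays bounded.
-/

open Filter Asymptotics

noncomputable def moyalProfile (R x : ℝ) : ℝ :=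
  x + (R + 1) / 2 + (1 / 8) / x - ((13 * R + 9) / 144) / x ^ 2

noncomputable def curvatureDefect (R : ℝ) (f : ℝ → ℝ) (x : ℝ) : ℝ :=
  (x + 1) * (f (x + 1) ^ 2 - f x ^ 2) / f (x + 1)
    + x * (f (x - 1) ^ 2 - f x ^ 2) / f (x - 1) - R / f x

def moyalCubic (R a u : ℝ) : ℝ :=
  144 * a ^ 3 + 72 * (R + 1) * a ^ 2 * u + 18 * a * u ^ 2 - (13 * R + 9) * u ^ 3

lemma moyalProfile_div (R : ℝ) {a u : ℝ} (ha : a ≠ 0) (hu : u ≠ 0) :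
    moyalProfile R (a / u) = moyalCubic R a u / (144 * a ^ 2 * u) := by
  unfold moyalProfile moyalCubic
  field_simp
  ring

/-- Found by computer algebra; `curvatureDefect_moyalProfile_inv` certifies it. -/
noncomputable def moyalDefectNum (R u : ℝ) : ℝ :=
  (746496 - 8626176 * R - 4810752 * R ^ 2) * u +
  (-5785344 - 9191232 * R - 3836160 * R ^ 2 - 2198016 * R ^ 3) * u ^ 2 +
  (-2286144 + 21119616 * R + 10300608 * R ^ 2 - 186624 * R ^ 3 - 269568 * R ^ 4) * u ^ 3 +
  (9797760 + 17589312 * R + 10063872 * R ^ 2 + 5672880 * R ^ 3 + 67392 * R ^ 4) * u ^ 4 +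
  (3965760 - 13589856 * R - 5544576 * R ^ 2 + 504144 * R ^ 3 + 703872 * R ^ 4) * u ^ 5 +
  (-3712068 - 9282033 * R - 7524324 * R ^ 2 - 4134420 * R ^ 3 - 146952 * R ^ 4) * u ^ 6 +
  (-2394765 + 1614168 * R + 733689 * R ^ 2 - 350136 * R ^ 3 - 510484 * R ^ 4) * u ^ 7 +
  (-165483 + 5993433/4 * R + 2195757 * R ^ 2 + 4376779/4 * R ^ 3 + 71279 * R ^ 4) * u ^ 8 +
  (258795 + 1187379/4 * R - 87669 * R ^ 2 + 456257/4 * R ^ 3 + 152061 * R ^ 4) * u ^ 9 +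
  (-441045/8 - 841671/4 * R - 240516 * R ^ 2 - 397631/4 * R ^ 3 - 811031/72 * R ^ 4) * u ^ 10 +
  (-10935/4 + 34587/4 * R + 29889/2 * R ^ 2 - 73203/4 * R ^ 3 - 707603/36 * R ^ 4) * u ^ 11 +
  (75087/16 + 114939/8 * R + 49491/4 * R ^ 2 + 19097/8 * R ^ 3 + 24167/48 * R ^ 4) * u ^ 12 +
  (-8019/16 - 14985/8 * R - 7371/4 * R ^ 2 + 2873/8 * R ^ 3 + 129623/144 * R ^ 4) * u ^ 13

def moyalDefectDen (R u : ℝ) : ℝ :=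
  (1 + u) * (1 - u) ^ 2 * moyalCubic R (1 + u) u * moyalCubic R (1 - u) u * moyalCubic R 1 u

lemma curvatureDefect_moyalProfile_inv (R : ℝ) {u : ℝ} (hu : u ≠ 0)
    (hden : moyalDefectDen R u ≠ 0) :
    curvatureDefect R (moyalProfile R) u⁻¹
      = u ^ 3 * (moyalDefectNum R u / moyalDefectDen R u) := by
  simp only [moyalDefectDen, mul_ne_zero_iff, pow_ne_zero_iff two_ne_zero] at hden
  obtain ⟨⟨⟨⟨hp, hm⟩, hQp⟩, hQm⟩, hQ0⟩ := hden
  have hx : u⁻¹ = 1 / u := (one_div u).symm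
  have hxp : u⁻¹ + 1 = (1 + u) / u := by field_simp
  have hxm : u⁻¹ - 1 = (1 - u) / u := by field_simp
  unfold curvatureDefect
  rw [hxp, hxm, hx, moyalProfile_div R hp hu, moyalProfile_div R hm hu,
    moyalProfile_div R one_ne_zero hu]
  unfold moyalDefectDen moyalDefectNum
  field_simp
  unfold moyalCubic
  ring

lemma continuous_moyalDefectDen (R : ℝ) : Continuous (moyalDefectDen R) := by
  unfold moyalDefectDen moyalCubic; fun_prop

lemma moyalDefectDen_zero_ne_zero (R : ℝ) : moyalDefectDen R 0 ≠ 0 := by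
  norm_num [moyalDefectDen, moyalCubic]

lemma isBigO_atTop_of_eq_mul_comp_inv {f g F : ℝ → ℝ} (hF : ContinuousAt F 0)
    (hf : ∀ᶠ x in atTop, f x = g x * F x⁻¹) : f =O[atTop] g := by
  have hbdd : (fun x => F x⁻¹) =O[atTop] (fun _ => (1 : ℝ)) :=
    (hF.tendsto.comp tendsto_inv_atTop_zero).isBigO_one ℝ
  simpa only [mul_one] using
    ((isBigO_refl g atTop).mul hbdd).congr' (hf.mono fun x hx => hx.symm) .rfl

theorem curvatureDefect_moyalProfile_isBigO (R : ℝ) :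
    curvatureDefect R (moyalProfile R) =O[atTop] fun x => 1 / x ^ 3 := by
  have hnum : Continuous (moyalDefectNum R) := by unfold moyalDefectNum; fun_prop
  have hcont : ContinuousAt (fun u => moyalDefectNum R u / moyalDefectDen R u) 0 :=
    hnum.continuousAt.div (continuous_moyalDefectDen R).continuousAt
      (moyalDefectDen_zero_ne_zero R)
  refine isBigO_atTop_of_eq_mul_comp_inv hcont ?_
  have hden : ∀ᶠ x : ℝ in atTop, moyalDefectDen R x⁻¹ ≠ 0 :=
    tendsto_inv_atTop_zero.eventually
      ((continuous_moyalDefectDen R).continuousAt.eventually_ne (moyalDefectDen_zero_ne_zero R))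
  filter_upwards [hden, eventually_gt_atTop 0] with x hx hpos
  rw [← inv_inv x, curvatureDefect_moyalProfile_inv R (inv_ne_zero hpos.ne') hx]
  simp only [inv_pow, inv_inv, one_div]

theorem moyal_sphere_stmt18_general (R : ℝ) (ψ : ℕ → ℝ)
    (hψ : ∀ n : ℕ, ψ n = (n : ℝ) + (R + 1) / 2 + (1 / 8) / (n : ℝ)
      - ((13 * R + 9) / 144) / (n : ℝ) ^ 2) :
    (fun n : ℕ =>
        ((n : ℝ) + 1) * (ψ (n + 1) ^ 2 - ψ n ^ 2) / ψ (n + 1)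
          + (n : ℝ) * (ψ (n - 1) ^ 2 - ψ n ^ 2) / ψ (n - 1)
          - R / ψ n)
      =O[atTop] fun n : ℕ => 1 / (n : ℝ) ^ 3 := by
  have hψ' : ψ = fun n : ℕ => moyalProfile R n := funext hψ
  refine ((curvatureDefect_moyalProfile_isBigO R).comp_tendsto
    tendsto_natCast_atTop_atTop).congr' ?_ .rfl
  filter_upwards [eventually_ge_atTop 1] with n hn
  simp only [Function.comp_apply, curvatureDefect, hψ', Nat.cast_add, Nat.cast_one,
    Nat.cast_sub hn]

/-- The asymptotic profile `ψ_n = n + (R+1)/2 + (1/8)n⁻¹ − ((13R+9)/144)n⁻²`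
satisfies the constant-curvature recurrence up to errors of order `n⁻³`. -/
theorem moyal_sphere_stmt18 (R : ℝ) (hR : 0 < R) (ψ : ℕ → ℝ)
    (hψ : ∀ n : ℕ, ψ n = (n : ℝ) + (R + 1) / 2 + (1 / 8) / (n : ℝ)
      - ((13 * R + 9) / 144) / (n : ℝ) ^ 2) :
    (fun n : ℕ =>
        ((n : ℝ) + 1) * (ψ (n + 1) ^ 2 - ψ n ^ 2) / ψ (n + 1)
          + (n : ℝ) * (ψ (n - 1) ^ 2 - ψ n ^ 2) / ψ (n - 1)
          - R / ψ n)
      =O[atTop] fun n : ℕ => 1 / (n : ℝ) ^ 3 :=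
  moyal_sphere_stmt18_general R ψ hψ
end
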